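/- Let W be a second-order working set selection and let (α^(t))_{t ∈ ℕ} be a sequence in R with (f(α^(t)))_{t ∈ ℕ} monotonically increasing. Suppose there are infinitely many t such that α^(t−1) ∉ R*, v_{W(α^(t−1))}ᵀ K v_{W(α^(t−1))} > 0, and α^(t) = α^(t−1) + μ* v_{W(α^(t−1))} ∈ R with the Newton step size μ* = (v_{W(α^(t−1))}ᵀ∇f(α^(t−1))) / (v_{W(α^(t−1))}ᵀ K v_{W(α^(t−1))}) (a free SMO step). Then lim_{t→∞} f(α^(t)) = f*. -/

import Mathlib

/-!
The values `f(α^(t))` increase to a limit `L ≤ f*`. By compactness of `R`, a subsequence of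
free-step iterates converges to some `A` with `f(A) = L`, and the gains of these steps tend to
`0`. A free step gains exactly `(v_Wᵀ∇f)² / (2 v_WᵀKv_W)`; since `i = W(α).1` maximizes the
gradient over `I_up`, the second-order rule makes this gain at least
`δ² / (2 max_B v_BᵀKv_B)` as soon as some `p ∈ I_up(α)`, `q ∈ I_down(α)` have
`(∇f(α))_p − (∇f(α))_q ≥ δ > 0`. Hence no working set `B ∈ B(A)` has `v_Bᵀ∇f(A) > 0`, and
this KKT condition makes `A` a maximizer of the concave `f` over `R`, so `L = f(A) = f*`.
-/

open Matrix Filter Topology ENNReal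

namespace SMO

noncomputable section

variable {l : ℕ}

/-- The dual SVM objective `f(α) = yᵀα − (1/2) αᵀKα`. -/
def obj (y : Fin l → ℝ) (K : Matrix (Fin l) (Fin l) ℝ) (α : Fin l → ℝ) : ℝ :=
  y ⬝ᵥ α - (1 / 2) * (α ⬝ᵥ (K *ᵥ α))

/-- The gradient `∇f(α) = y − Kα`. -/
def grad (y : Fin l → ℝ) (K : Matrix (Fin l) (Fin l) ℝ) (α : Fin l → ℝ) : Fin l → ℝ :=
  y - K *ᵥ α

/-- The direction `v_B = e_i − e_j` of a working set `B = (i, j)`. -/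
def dir (B : Fin l × Fin l) : Fin l → ℝ :=
  Pi.single B.1 1 - Pi.single B.2 1

/-- Lower bound `L_i = min {0, y_i C}`. -/
def lb (y : Fin l → ℝ) (C : ℝ) (i : Fin l) : ℝ := min 0 (y i * C)

/-- Upper bound `U_i = max {0, y_i C}`. -/
def ub (y : Fin l → ℝ) (C : ℝ) (i : Fin l) : ℝ := max 0 (y i * C)

/-- The feasible region `R`. -/
def feas (y : Fin l → ℝ) (C : ℝ) : Set (Fin l → ℝ) :=
  {α | (∑ i, α i) = 0 ∧ ∀ i, lb y C i ≤ α i ∧ α i ≤ ub y C i}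

/-- `I_up(α) = {i : α_i < U_i}`. -/
def Iup (y : Fin l → ℝ) (C : ℝ) (α : Fin l → ℝ) : Set (Fin l) := {i | α i < ub y C i}

/-- `I_down(α) = {i : α_i > L_i}`. -/
def Idown (y : Fin l → ℝ) (C : ℝ) (α : Fin l → ℝ) : Set (Fin l) := {i | lb y C i < α i}

/-- The set `B(α)` of working sets feasible at `α`. -/
def wsets (y : Fin l → ℝ) (C : ℝ) (α : Fin l → ℝ) : Set (Fin l × Fin l) :=
  {B | B.1 ∈ Iup y C α ∧ B.2 ∈ Idown y C α ∧ B.1 ≠ B.2}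

/-- The optimal value `f* = max {f(α) : α ∈ R}`. -/
def fstar (y : Fin l → ℝ) (K : Matrix (Fin l) (Fin l) ℝ) (C : ℝ) : ℝ :=
  sSup (obj y K '' feas y C)

/-- The optimal set `R* = {α ∈ R : f(α) = f*}`. -/
def opt (y : Fin l → ℝ) (K : Matrix (Fin l) (Fin l) ℝ) (C : ℝ) : Set (Fin l → ℝ) :=
  {α ∈ feas y C | obj y K α = fstar y K C}

/-- The gap function `ψ(α) = max {v_Bᵀ ∇f(α) : B ∈ B(α)}`. -/
def psi (y : Fin l → ℝ) (K : Matrix (Fin l) (Fin l) ℝ) (C : ℝ) (α : Fin l → ℝ) : ℝ :=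
  sSup ((fun B => dir B ⬝ᵥ grad y K α) '' wsets y C α)

/-- The Newton-step gain `g̃_B(α) = (v_Bᵀ∇f(α))² / (2 v_BᵀKv_B) ∈ [0, ∞]`, with the
conventions `g̃_B(α) = 0` if `v_BᵀKv_B = 0` and `v_Bᵀ∇f(α) = 0`, and `g̃_B(α) = ∞` if
`v_BᵀKv_B = 0` and `v_Bᵀ∇f(α) ≠ 0`. -/
def ngain (y : Fin l → ℝ) (K : Matrix (Fin l) (Fin l) ℝ) (B : Fin l × Fin l)
    (α : Fin l → ℝ) : ℝ≥0∞ :=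
  if dir B ⬝ᵥ (K *ᵥ dir B) = 0 then
    (if dir B ⬝ᵥ grad y K α = 0 then 0 else ⊤)
  else ENNReal.ofReal ((dir B ⬝ᵥ grad y K α) ^ 2 / (2 * (dir B ⬝ᵥ (K *ᵥ dir B))))

/-- A second-order working set selection: on every non-optimal feasible `α` it returns a
working set `W(α) = (i, j) ∈ B(α)` such that `i` maximizes `(∇f(α))_n` over `n ∈ I_up(α)`
and `j` maximizes `g̃_{(i,n)}(α)` over `n ∈ I_down(α) \ {i}`. -/
def IsSecondOrderWSS (y : Fin l → ℝ) (K : Matrix (Fin l) (Fin l) ℝ) (C : ℝ)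
    (W : (Fin l → ℝ) → Fin l × Fin l) : Prop :=
  ∀ α ∈ feas y C \ opt y K C,
    W α ∈ wsets y C α ∧
    (∀ n ∈ Iup y C α, grad y K α n ≤ grad y K α (W α).1) ∧
    (∀ n ∈ Idown y C α, n ≠ (W α).1 → ngain y K ((W α).1, n) α ≤ ngain y K (W α) α)

theorem _root_.IsSeqCompact.exists_strictMono_forall_mem_tendsto {X : Type*}
    [TopologicalSpace X] {s : Set X} (hs : IsSeqCompact s) {P : Set ℕ} (hP : P.Infinite)
    {x : ℕ → X} (hx : ∀ n ∈ P, x n ∈ s) :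
    ∃ A ∈ s, ∃ φ : ℕ → ℕ, StrictMono φ ∧ (∀ k, φ k ∈ P) ∧ Tendsto (x ∘ φ) atTop (𝓝 A) := by
  have hnth : ∀ k, Nat.nth (· ∈ P) k ∈ P := Nat.nth_mem_of_infinite hP
  obtain ⟨A, hA, ψ, hψ, hlim⟩ := hs fun k => hx _ (hnth k)
  exact ⟨A, hA, _, (Nat.nth_strictMono hP).comp hψ, fun k => hnth (ψ k), hlim⟩

theorem dotProduct_mulVec_comm {n R : Type*} [Fintype n] [CommSemiring R] {K : Matrix n n R}
    (hK : K.IsSymm) (x z : n → R) : x ⬝ᵥ (K *ᵥ z) = z ⬝ᵥ (K *ᵥ x) := by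
  rw [dotProduct_mulVec, ← mulVec_transpose, hK.eq, dotProduct_comm]

theorem isSymm_of_posSemidef {n : Type*} [Fintype n] {K : Matrix n n ℝ} (hK : K.PosSemidef) :
    K.IsSymm := by
  simpa [IsSymm, conjTranspose_eq_transpose_of_trivial] using hK.1

section

variable {y : Fin l → ℝ} {K : Matrix (Fin l) (Fin l) ℝ} {C : ℝ}

theorem dir_dotProduct (B : Fin l × Fin l) (w : Fin l → ℝ) : dir B ⬝ᵥ w = w B.1 - w B.2 := by
  simp [dir, sub_dotProduct]

theorem continuous_obj : Continuous (obj y K) := by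
  unfold obj; fun_prop

theorem continuous_grad : Continuous (grad y K) := by
  unfold grad; fun_prop

theorem isCompact_feas : IsCompact (feas y C) := by
  have hbox : IsCompact (Set.univ.pi fun i => Set.Icc (lb y C i) (ub y C i)) :=
    isCompact_univ_pi fun _ => isCompact_Icc
  refine hbox.of_isClosed_subset ?_ fun α hα i _ => hα.2 i
  have hsum : IsClosed {α : Fin l → ℝ | ∑ i, α i = 0} := isClosed_eq (by fun_prop) (by fun_prop)
  have hbounds : IsClosed {α : Fin l → ℝ | ∀ i, lb y C i ≤ α i ∧ α i ≤ ub y C i} := by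
    simp only [Set.ofPred_forall, Set.ofPred_and]
    exact isClosed_iInter fun i =>
      (isClosed_le continuous_const (continuous_apply i)).inter
        (isClosed_le (continuous_apply i) continuous_const)
  exact hsum.inter hbounds

theorem obj_le_fstar {α : Fin l → ℝ} (hα : α ∈ feas y C) : obj y K α ≤ fstar y K C :=
  le_csSup (isCompact_feas.image continuous_obj).bddAbove ⟨α, hα, rfl⟩

theorem obj_add_smul (hK : K.IsSymm) (α v : Fin l → ℝ) (μ : ℝ) :
    obj y K (α + μ • v) =
      obj y K α + μ * (v ⬝ᵥ grad y K α) - μ ^ 2 / 2 * (v ⬝ᵥ (K *ᵥ v)) := by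
  simp only [obj, grad, mulVec_add, mulVec_smul, dotProduct_add, add_dotProduct,
    dotProduct_smul, smul_dotProduct, dotProduct_sub, smul_eq_mul,
    dotProduct_mulVec_comm hK α v, dotProduct_comm y v]
  ring

theorem obj_le_add_grad_dotProduct (hK : K.PosSemidef) (α β : Fin l → ℝ) :
    obj y K β ≤ obj y K α + grad y K α ⬝ᵥ (β - α) := by
  have hexp := obj_add_smul (y := y) (isSymm_of_posSemidef hK) α (β - α) 1
  have hcurv : 0 ≤ (β - α) ⬝ᵥ (K *ᵥ (β - α)) := by
    simpa using hK.dotProduct_mulVec_nonneg (β - α)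
  rw [one_smul, add_sub_cancel] at hexp
  rw [hexp, dotProduct_comm]
  linarith

/-- The unclipped SMO update along `v_B` with the Newton step size `μ*`. -/
def newtonStep (y : Fin l → ℝ) (K : Matrix (Fin l) (Fin l) ℝ) (B : Fin l × Fin l)
    (α : Fin l → ℝ) : Fin l → ℝ :=
  α + ((dir B ⬝ᵥ grad y K α) / (dir B ⬝ᵥ (K *ᵥ dir B))) • dir B

theorem obj_newtonStep (hK : K.IsSymm) {B : Fin l × Fin l} (hB : dir B ⬝ᵥ (K *ᵥ dir B) ≠ 0)
    (α : Fin l → ℝ) :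
    obj y K (newtonStep y K B α) =
      obj y K α + (dir B ⬝ᵥ grad y K α) ^ 2 / (2 * (dir B ⬝ᵥ (K *ᵥ dir B))) := by
  rw [newtonStep, obj_add_smul hK]
  field_simp
  ring

def IsFreeStep (y : Fin l → ℝ) (K : Matrix (Fin l) (Fin l) ℝ) (C : ℝ)
    (W : (Fin l → ℝ) → Fin l × Fin l) (α β : Fin l → ℝ) : Prop :=
  α ∉ opt y K C ∧ 0 < dir (W α) ⬝ᵥ (K *ᵥ dir (W α)) ∧ β = newtonStep y K (W α) α ∧
    β ∈ feas y C

theorem dotProduct_sub_nonpos_of_le {g A β : Fin l → ℝ} (hA : A ∈ feas y C) (hβ : β ∈ feas y C)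
    (hg : ∀ i ∈ Iup y C A, ∀ j ∈ Idown y C A, i ≠ j → g i ≤ g j) :
    g ⬝ᵥ (β - A) ≤ 0 := by
  set d := β - A
  have hsum : ∑ n, d n = 0 := by simp [d, Finset.sum_sub_distrib, hβ.1, hA.1]
  by_cases hneg : ∃ j, d j < 0
  · obtain ⟨j0, hj0⟩ := hneg
    obtain ⟨j, hj, hjmin⟩ := (Finset.univ.filter (d · < 0)).exists_min_image g
      ⟨j0, by simpa using hj0⟩
    have hj : d j < 0 := (Finset.mem_filter.1 hj).2
    have hterm : ∀ n, g n * d n ≤ g j * d n := by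
      intro n
      rcases lt_trichotomy (d n) 0 with hn | hn | hn
      · exact mul_le_mul_of_nonpos_right (hjmin n (by simpa using hn)) hn.le
      · simp [hn]
      · have hup : n ∈ Iup y C A := by
          have := (hβ.2 n).2; simp only [d, Pi.sub_apply, sub_pos] at hn; exact hn.trans_le this
        have hdown : j ∈ Idown y C A := by
          have := (hβ.2 j).1; simp only [d, Pi.sub_apply, sub_neg] at hj; exact this.trans_lt hj
        have hnj : n ≠ j := by rintro rfl; linarith
        exact mul_le_mul_of_nonneg_right (hg n hup j hdown hnj) hn.le
    calc g ⬝ᵥ d = ∑ n, g n * d n := rfl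
      _ ≤ ∑ n, g j * d n := Finset.sum_le_sum fun n _ => hterm n
      _ = 0 := by rw [← Finset.mul_sum, hsum, mul_zero]
  · push Not at hneg
    have hd : ∀ n, d n = 0 := fun n =>
      (Finset.sum_eq_zero_iff_of_nonneg fun n _ => hneg n).1 hsum n (Finset.mem_univ n)
    simp [dotProduct, hd]

theorem fstar_le_obj_of_dir_dotProduct_grad_nonpos (hK : K.PosSemidef) {A : Fin l → ℝ}
    (hA : A ∈ feas y C) (hkkt : ∀ B ∈ wsets y C A, dir B ⬝ᵥ grad y K A ≤ 0) :
    fstar y K C ≤ obj y K A := by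
  refine csSup_le ⟨_, A, hA, rfl⟩ ?_
  rintro _ ⟨β, hβ, rfl⟩
  have hfirst := dotProduct_sub_nonpos_of_le hA hβ fun i hi j hj hij => by
    simpa [dir_dotProduct, sub_nonpos] using hkkt (i, j) ⟨hi, hj, hij⟩
  linarith [obj_le_add_grad_dotProduct (y := y) hK A β]

theorem sq_div_le_obj_newtonStep_sub (hK : K.PosSemidef) {W : (Fin l → ℝ) → Fin l × Fin l}
    (hW : IsSecondOrderWSS y K C W) {α : Fin l → ℝ} (hα : α ∈ feas y C \ opt y K C)
    (hc : 0 < dir (W α) ⬝ᵥ (K *ᵥ dir (W α))) {p q : Fin l} (hp : p ∈ Iup y C α)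
    (hq : q ∈ Idown y C α) {δ M : ℝ} (hδ : 0 < δ) (hδpq : δ ≤ dir (p, q) ⬝ᵥ grad y K α)
    (hM : ∀ B, dir B ⬝ᵥ (K *ᵥ dir B) ≤ M) :
    δ ^ 2 / (2 * M) ≤ obj y K (newtonStep y K (W α) α) - obj y K α := by
  obtain ⟨-, hi, hj⟩ := hW α hα
  set i := (W α).1
  have hiq : δ ≤ dir (i, q) ⬝ᵥ grad y K α := by
    have := hi p hp
    rw [dir_dotProduct] at hδpq ⊢
    dsimp only at hδpq ⊢
    linarith
  have hqi : q ≠ i := by rintro rfl; simp [dir_dotProduct] at hiq; linarith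
  have hsel := hj q hq hqi
  have hgainW : ngain y K (W α) α = ENNReal.ofReal
      ((dir (W α) ⬝ᵥ grad y K α) ^ 2 / (2 * (dir (W α) ⬝ᵥ (K *ᵥ dir (W α))))) := by
    simp [ngain, hc.ne']
  rw [obj_newtonStep (isSymm_of_posSemidef hK) hc.ne', add_sub_cancel_left]
  have hciq : 0 ≤ dir (i, q) ⬝ᵥ (K *ᵥ dir (i, q)) := by
    simpa using hK.dotProduct_mulVec_nonneg (dir (i, q))
  rcases hciq.eq_or_lt with h0 | hpos
  · -- `(i, q)` would have infinite gain, which `W α` cannot match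
    rw [ngain, if_pos h0.symm, if_neg (hδ.trans_le hiq).ne', hgainW, top_le_iff] at hsel
    exact absurd hsel ENNReal.ofReal_ne_top
  · rw [ngain, if_neg hpos.ne', hgainW,
      ENNReal.ofReal_le_ofReal_iff (div_nonneg (sq_nonneg _) (by linarith))] at hsel
    calc δ ^ 2 / (2 * M)
        ≤ (dir (i, q) ⬝ᵥ grad y K α) ^ 2 / (2 * (dir (i, q) ⬝ᵥ (K *ᵥ dir (i, q)))) :=
          div_le_div₀ (sq_nonneg _) (pow_le_pow_left₀ hδ.le hiq 2) (by positivity)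
            (by linarith [hM (i, q)])
      _ ≤ _ := hsel

theorem dir_dotProduct_grad_nonpos_of_tendsto (hK : K.PosSemidef)
    {W : (Fin l → ℝ) → Fin l × Fin l} (hW : IsSecondOrderWSS y K C W)
    {α β : ℕ → Fin l → ℝ} {A : Fin l → ℝ} (hfeas : ∀ k, α k ∈ feas y C)
    (hfree : ∀ k, IsFreeStep y K C W (α k) (β k)) (hα : Tendsto α atTop (𝓝 A))
    (hgain : Tendsto (fun k => obj y K (β k) - obj y K (α k)) atTop (𝓝 0)) :
    ∀ B ∈ wsets y C A, dir B ⬝ᵥ grad y K A ≤ 0 := by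
  intro B hB
  by_contra! hpos
  obtain ⟨M, hM⟩ := (Set.finite_range fun B : Fin l × Fin l => dir B ⬝ᵥ (K *ᵥ dir B)).bddAbove
  have hM1 : ∀ B : Fin l × Fin l, dir B ⬝ᵥ (K *ᵥ dir B) ≤ max M 1 :=
    fun B => (hM ⟨B, rfl⟩).trans (le_max_left _ _)
  set δ := dir B ⬝ᵥ grad y K A / 2
  have hδ : 0 < δ := half_pos hpos
  have hgrad : ∀ᶠ k in atTop, δ ≤ dir B ⬝ᵥ grad y K (α k) :=
    (((continuous_const.dotProduct continuous_grad).tendsto A).comp hα).eventually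
      (eventually_ge_nhds (half_lt_self hpos))
  have hup : ∀ᶠ k in atTop, α k B.1 < ub y C B.1 :=
    (((continuous_apply B.1).tendsto A).comp hα).eventually (eventually_lt_nhds hB.1)
  have hdown : ∀ᶠ k in atTop, lb y C B.2 < α k B.2 :=
    (((continuous_apply B.2).tendsto A).comp hα).eventually (eventually_gt_nhds hB.2.1)
  have hsmall : ∀ᶠ k in atTop, obj y K (β k) - obj y K (α k) < δ ^ 2 / (2 * max M 1) :=
    hgain.eventually (eventually_lt_nhds (by positivity))
  obtain ⟨k, hkgrad, hkup, hkdown, hksmall⟩ := (hgrad.and (hup.and (hdown.and hsmall))).exists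
  obtain ⟨hnopt, hc, hstep, -⟩ := hfree k
  have hbig := sq_div_le_obj_newtonStep_sub hK hW ⟨hfeas k, hnopt⟩ hc hkup hkdown hδ hkgrad hM1
  rw [← hstep] at hbig
  linarith

end

theorem convergence_free_steps_general
    (y : Fin l → ℝ)
    (K : Matrix (Fin l) (Fin l) ℝ) (hK : K.PosSemidef) (C : ℝ)
    (W : (Fin l → ℝ) → Fin l × Fin l) (hW : IsSecondOrderWSS y K C W)
    (a : ℕ → Fin l → ℝ) (ha : ∀ t, a t ∈ feas y C)
    (hmono : Monotone fun t => obj y K (a t))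
    (hfree : {t : ℕ |
        a t ∉ opt y K C ∧
        0 < dir (W (a t)) ⬝ᵥ (K *ᵥ dir (W (a t))) ∧
        a (t + 1) = a t +
          ((dir (W (a t)) ⬝ᵥ grad y K (a t)) /
            (dir (W (a t)) ⬝ᵥ (K *ᵥ dir (W (a t))))) • dir (W (a t)) ∧
        a (t + 1) ∈ feas y C}.Infinite) :
    Tendsto (fun t => obj y K (a t)) atTop (𝓝 (fstar y K C)) := by
  have hbdd : BddAbove (Set.range fun t => obj y K (a t)) :=
    ⟨fstar y K C, by rintro _ ⟨t, rfl⟩; exact obj_le_fstar (ha t)⟩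
  have hlim := tendsto_atTop_ciSup hmono hbdd
  obtain ⟨A, hA, φ, hφ, hfreeφ, hconv⟩ :=
    isCompact_feas.isSeqCompact.exists_strictMono_forall_mem_tendsto hfree fun t _ => ha t
  have hlimφ := hlim.comp hφ.tendsto_atTop
  have hlimφ' := hlim.comp ((tendsto_add_atTop_nat 1).comp hφ.tendsto_atTop)
  have hobjA : obj y K A = ⨆ t, obj y K (a t) :=
    tendsto_nhds_unique ((continuous_obj.tendsto A).comp hconv) hlimφ
  have hkkt := dir_dotProduct_grad_nonpos_of_tendsto hK hW (fun k => ha (φ k)) hfreeφ hconv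
    (by simpa using hlimφ'.sub hlimφ)
  have hsup : ⨆ t, obj y K (a t) = fstar y K C :=
    le_antisymm (ciSup_le fun t => obj_le_fstar (ha t))
      (hobjA ▸ fstar_le_obj_of_dir_dotProduct_grad_nonpos hK hA hkkt)
  exact hsup ▸ hlim

/-- If `(f(α^(t)))` is monotonically increasing and there are infinitely
many `t` such that `α^(t) ∉ R*`, `v_{W(α^(t))}ᵀKv_{W(α^(t))} > 0`, and
`α^(t+1) = α^(t) + μ* v_{W(α^(t))} ∈ R` with the Newton step size `μ*` (a free SMO step),
then `f(α^(t)) → f*`. -/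
theorem convergence_free_steps
    (hl : 2 ≤ l) (y : Fin l → ℝ) (hy : ∀ i, y i = 1 ∨ y i = -1)
    (K : Matrix (Fin l) (Fin l) ℝ) (hK : K.PosSemidef) (C : ℝ) (hC : 0 < C)
    (W : (Fin l → ℝ) → Fin l × Fin l) (hW : IsSecondOrderWSS y K C W)
    (a : ℕ → Fin l → ℝ) (ha : ∀ t, a t ∈ feas y C)
    (hmono : Monotone fun t => obj y K (a t))
    (hfree : {t : ℕ |
        a t ∉ opt y K C ∧
        0 < dir (W (a t)) ⬝ᵥ (K *ᵥ dir (W (a t))) ∧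
        a (t + 1) = a t +
          ((dir (W (a t)) ⬝ᵥ grad y K (a t)) /
            (dir (W (a t)) ⬝ᵥ (K *ᵥ dir (W (a t))))) • dir (W (a t)) ∧
        a (t + 1) ∈ feas y C}.Infinite) :
    Tendsto (fun t => obj y K (a t)) atTop (𝓝 (fstar y K C)) :=
  convergence_free_steps_general y K hK C W hW a ha hmono hfree

end

end SMO
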